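/- Let N ≥ 2, m ≥ 0, and let a = (a_1,…,a_N) be an N-tuple of nonnegative integers summing to m with max_j a_j − min_j a_j ≥ 2. Then a is not maximal for the partial order on N-tuples given by comparing all the functions r_k: there exists an N-tuple b of nonnegative integers summing to m with r_k(a) ≤ r_k(b) for all 1 ≤ k ≤ N and r_k(a) < r_k(b) for some k. -/

import Mathlib

/-- `rmin N c k` is the minimum of the sums of `k` distinct entries of `c`. -/
noncomputable def rmin (N : ℕ) (c : Fin N → ℕ) (k : ℕ) : ℕ :=
  sInf {x | ∃ s : Finset (Fin N), s.card = k ∧ ∑ i ∈ s, c i = x}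

/-!
Let `j` be a position of a minimal entry of `a` and `i` one of a maximal entry, so that
`a j + 2 ≤ a i`, and let `b` be obtained from `a` by moving one unit from `i` to `j`.
A `k`-sum of `b` is at least the corresponding `k`-sum of `a`, unless it uses `i` but not `j`; then
swapping `i` for `j` gives a `k`-sum of `a` that is smaller still. Hence `r_k(a) ≤ r_k(b)`
for all `k`. If `k` is the number of minimal entries of `a`, then `r_k(a) = k · a j`, while
`b` has only `k - 1` entries of value `≤ a j` (and none below), so `r_k(b) > k · a j`.
-/

open Finset

namespace rmin

variable {N : ℕ}

lemma le_sum (c : Fin N → ℕ) (s : Finset (Fin N)) : rmin N c s.card ≤ ∑ t ∈ s, c t :=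
  Nat.sInf_le ⟨s, rfl, rfl⟩

lemma le_of_forall_le_sum {c : Fin N → ℕ} {k x : ℕ} (hk : k ≤ N)
    (h : ∀ s : Finset (Fin N), s.card = k → x ≤ ∑ t ∈ s, c t) : x ≤ rmin N c k := by
  obtain ⟨s, -, hs⟩ := exists_subset_card_eq (s := (univ : Finset (Fin N)))
    (n := k) (by simpa using hk)
  refine le_csInf ⟨_, s, hs, rfl⟩ ?_
  rintro _ ⟨s, hs, rfl⟩
  exact h s hs

lemma card_mul_lt_sum {c : Fin N → ℕ} {μ : ℕ} (hμ : ∀ t, μ ≤ c t) {s : Finset (Fin N)}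
    (hs : #{t | c t ≤ μ} < s.card) : s.card * μ < ∑ t ∈ s, c t := by
  obtain ⟨t, ht, hlt⟩ : ∃ t ∈ s, μ < c t := by
    by_contra! h
    have : s ⊆ ({t | c t ≤ μ} : Finset (Fin N)) := fun t ht => by simpa using h t ht
    exact (card_le_card this).not_gt hs
  calc s.card * μ = ∑ _t ∈ s, μ := by rw [sum_const, smul_eq_mul]
    _ < ∑ t ∈ s, c t := sum_lt_sum (fun t _ => hμ t) ⟨t, ht, hlt⟩

end rmin

/-- `b` arises from `a` by moving one unit from position `i` to position `j`. -/
def IsTransfer {N : ℕ} (a b : Fin N → ℕ) (i j : Fin N) : Prop :=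
  ∀ t, b t + (if t = i then 1 else 0) = a t + (if t = j then 1 else 0)

namespace IsTransfer

variable {N : ℕ} {a b : Fin N → ℕ} {i j : Fin N}

lemma sum_add_ite_mem (hb : IsTransfer a b i j) (s : Finset (Fin N)) :
    ∑ t ∈ s, b t + (if i ∈ s then 1 else 0) =
      ∑ t ∈ s, a t + (if j ∈ s then 1 else 0) := by
  rw [← sum_ite_eq' s i (fun _ => 1), ← sum_ite_eq' s j (fun _ => 1),
    ← sum_add_distrib, ← sum_add_distrib]
  exact sum_congr rfl fun t _ => hb t

lemma rmin_card_le_sum (hb : IsTransfer a b i j) (hlt : a j < a i) (s : Finset (Fin N)) :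
    rmin N a s.card ≤ ∑ t ∈ s, b t := by
  have hsum := hb.sum_add_ite_mem s
  by_cases hswap : i ∈ s ∧ j ∉ s
  · obtain ⟨hi, hj⟩ := hswap
    have hj' : j ∉ s.erase i := fun h => hj (mem_of_mem_erase h)
    have hcard : (insert j (s.erase i)).card = s.card := by
      rw [card_insert_of_notMem hj', card_erase_add_one hi]
    have hswap_sum : ∑ t ∈ insert j (s.erase i), a t + a i = ∑ t ∈ s, a t + a j := by
      rw [sum_insert hj', ← add_sum_erase s a hi]
      ring
    have := rmin.le_sum a (insert j (s.erase i))
    rw [hcard] at this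
    simp only [hi, hj, if_true, if_false] at hsum
    omega
  · have hle : ∑ t ∈ s, a t ≤ ∑ t ∈ s, b t := by split_ifs at hsum <;> grind
    exact (rmin.le_sum a s).trans hle

lemma rmin_le_rmin (hb : IsTransfer a b i j) (hlt : a j < a i) {k : ℕ} (hk : k ≤ N) :
    rmin N a k ≤ rmin N b k :=
  rmin.le_of_forall_le_sum hk fun s hs => hs ▸ hb.rmin_card_le_sum hlt s

lemma rmin_lt_rmin (hb : IsTransfer a b i j) (hmin : ∀ t, a j ≤ a t) (hgap : a j + 2 ≤ a i) :
    rmin N a #{t | a t ≤ a j} < rmin N b #{t | a t ≤ a j} := by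
  set M : Finset (Fin N) := {t | a t ≤ a j}
  have hM : M.card ≤ N := (card_le_univ M).trans_eq (Fintype.card_fin N)
  have hupper : rmin N a M.card ≤ M.card * a j :=
    (rmin.le_sum a M).trans (by simpa using sum_le_card_nsmul M a (a j) (by simp [M]))
  have hbmin : ∀ t, a j ≤ b t := fun t => by grind [IsTransfer]
  have hfewer : #{t | b t ≤ a j} < M.card := by
    refine card_lt_card ((ssubset_iff_of_subset ?_).2 ⟨j, by simp [M], ?_⟩)
    · intro t; simp only [M, mem_filter, mem_univ, true_and]; grind [IsTransfer]
    · simp only [mem_filter, mem_univ, true_and]; grind [IsTransfer]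
  exact hupper.trans_lt <| rmin.le_of_forall_le_sum hM fun s hs =>
    hs ▸ rmin.card_mul_lt_sum hbmin (hs ▸ hfewer)

end IsTransfer

theorem stmt_3_general (N m : ℕ) (a : Fin N → ℕ)
    (ha : ∑ i, a i = m) (hbig : ∃ i j, a j + 2 ≤ a i) :
    ∃ b : Fin N → ℕ, (∑ i, b i = m) ∧
      (∀ k, 1 ≤ k → k ≤ N → rmin N a k ≤ rmin N b k) ∧
      (∃ k, 1 ≤ k ∧ k ≤ N ∧ rmin N a k < rmin N b k) := by
  obtain ⟨i₀, j₀, h₀⟩ := hbig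
  have : Nonempty (Fin N) := ⟨i₀⟩
  obtain ⟨i, hmax⟩ := Finite.exists_max a
  obtain ⟨j, hmin⟩ := Finite.exists_min a
  have hgap : a j + 2 ≤ a i := by linarith [hmax i₀, hmin j₀]
  set b : Fin N → ℕ := fun t => a t + (if t = j then 1 else 0) - (if t = i then 1 else 0)
  have hb : IsTransfer a b i j := by
    intro t
    by_cases hti : t = i
    · subst hti; simp only [b]; split_ifs <;> omega
    · simp [b, hti]
  refine ⟨b, ?_, fun k _ hk => hb.rmin_le_rmin (by omega) hk,
    #{t | a t ≤ a j}, card_pos.2 ⟨j, by simp⟩, ?_, hb.rmin_lt_rmin hmin hgap⟩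
  · simpa [ha] using hb.sum_add_ite_mem univ
  · exact (card_le_univ _).trans_eq (Fintype.card_fin N)

/-- A tuple with two entries differing by at least `2` is not maximal for the order
given by comparing all the `r_k`. -/
theorem stmt_3 (N m : ℕ) (hN : 2 ≤ N) (a : Fin N → ℕ)
    (ha : ∑ i, a i = m) (hbig : ∃ i j, a j + 2 ≤ a i) :
    ∃ b : Fin N → ℕ, (∑ i, b i = m) ∧
      (∀ k, 1 ≤ k → k ≤ N → rmin N a k ≤ rmin N b k) ∧
      (∃ k, 1 ≤ k ∧ k ≤ N ∧ rmin N a k < rmin N b k) :=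
  stmt_3_general N m a ha hbig
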